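/- arXiv:1008.4826 — 2 statements merged into one kernel-verified Lean document; each statement's English description precedes it below -/
import Mathlib

section
/- Let n, m, r be positive natural numbers with r ≤ n. Suppose for each i ∈ Fin r we are given a rational number c_i and a nonzero rational number w_i, and suppose that for every natural number j with 1 ≤ j ≤ r - 1 we have ∑_{i} c_i^j / w_i = 0 and also ∑_{i} 1 / w_i = 0. Then ∑_{i} c_i^n / w_i = 0. -/
theorem power_sum_vanishing (n m r : ℕ) (hn : 0 < n) (hm : 0 < m) (hr : 0 < r)
    (hrn : r ≤ n) (c w : Fin r → ℚ) (hw : ∀ i, w i ≠ 0)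
    (hpow : ∀ j : ℕ, 1 ≤ j → j ≤ r - 1 → ∑ i : Fin r, c i ^ j / w i = 0)
    (h0 : ∑ i : Fin r, 1 / w i = 0) :
    ∑ i : Fin r, c i ^ n / w i = 0 := by
  classical
  -- Step 1: any polynomial of degree ≤ r-1 has vanishing weighted sum of evaluations.
  have key : ∀ P : Polynomial ℚ, P.natDegree ≤ r - 1 →
      ∑ i : Fin r, P.eval (c i) / w i = 0 := by
    intro P hP
    have hlt : P.natDegree < r := lt_of_le_of_lt hP (Nat.sub_lt hr one_pos)
    have heval : ∀ i : Fin r,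
        P.eval (c i) = ∑ j ∈ Finset.range r, P.coeff j * c i ^ j := fun i =>
      Polynomial.eval_eq_sum_range' hlt (c i)
    calc ∑ i : Fin r, P.eval (c i) / w i
        = ∑ i : Fin r, ∑ j ∈ Finset.range r, P.coeff j * (c i ^ j / w i) := by
          refine Finset.sum_congr rfl fun i _ => ?_
          rw [heval i, Finset.sum_div]
          exact Finset.sum_congr rfl fun j _ => by ring
      _ = ∑ j ∈ Finset.range r, P.coeff j * ∑ i : Fin r, c i ^ j / w i := by
          rw [Finset.sum_comm]
          exact Finset.sum_congr rfl fun j _ => (Finset.mul_sum _ _ _).symm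
      _ = 0 := by
          refine Finset.sum_eq_zero fun j hj => ?_
          rcases Nat.eq_zero_or_pos j with h | h
          · subst h
            simp only [pow_zero]
            rw [h0, mul_zero]
          · rw [hpow j h (Nat.le_sub_one_of_lt (Finset.mem_range.mp hj)), mul_zero]
  set S : Finset ℚ := Finset.image c Finset.univ with hS
  -- Step 2: each fiber coefficient vanishes.
  have fiber : ∀ s ∈ S, ∑ i ∈ Finset.univ.filter (fun i => c i = s), (1 : ℚ) / w i = 0 := by
    intro s hs
    set P : Polynomial ℚ := ∏ t ∈ S.erase s, (Polynomial.X - Polynomial.C t) with hPdef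
    have hdeg : P.natDegree ≤ r - 1 := by
      have h1 : P.natDegree = (S.erase s).card := by
        rw [hPdef, Polynomial.natDegree_prod _ _
          (fun t _ => Polynomial.X_sub_C_ne_zero t)]
        simp [Polynomial.natDegree_X_sub_C]
      rw [h1, Finset.card_erase_of_mem hs]
      have : S.card ≤ r := le_trans (Finset.card_image_le) (by simp)
      omega
    have hzero := key P hdeg
    have hval : ∀ i : Fin r, P.eval (c i) =
        if c i = s then ∏ t ∈ S.erase s, (s - t) else 0 := by
      intro i
      rw [hPdef]
      simp only [Polynomial.eval_prod, Polynomial.eval_sub, Polynomial.eval_X,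
        Polynomial.eval_C]
      by_cases h : c i = s
      · simp [h]
      · rw [if_neg h]
        refine Finset.prod_eq_zero (i := c i) ?_ (by ring)
        exact Finset.mem_erase.mpr ⟨h, Finset.mem_image.mpr ⟨i, Finset.mem_univ i, rfl⟩⟩
    have hvne : (∏ t ∈ S.erase s, (s - t)) ≠ 0 := by
      refine Finset.prod_ne_zero_iff.mpr fun t ht => ?_
      exact sub_ne_zero.mpr (Ne.symm (Finset.mem_erase.mp ht).1)
    have : ∑ i : Fin r, P.eval (c i) / w i =
        (∏ t ∈ S.erase s, (s - t)) * ∑ i ∈ Finset.univ.filter (fun i => c i = s), 1 / w i := by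
      rw [Finset.mul_sum, ← Finset.sum_filter_add_sum_filter_not Finset.univ (fun i => c i = s)]
      have h2 : ∑ i ∈ Finset.univ.filter (fun i => ¬ c i = s), P.eval (c i) / w i = 0 := by
        refine Finset.sum_eq_zero fun i hi => ?_
        rw [hval i, if_neg (Finset.mem_filter.mp hi).2, zero_div]
      rw [h2, add_zero]
      refine Finset.sum_congr rfl fun i hi => ?_
      rw [hval i, if_pos (Finset.mem_filter.mp hi).2]
      ring
    rw [this] at hzero
    exact (mul_eq_zero.mp hzero).resolve_left hvne
  -- Step 3: conclude.
  have : ∑ i : Fin r, c i ^ n / w i =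
      ∑ s ∈ S, ∑ i ∈ Finset.univ.filter (fun i => c i = s), c i ^ n / w i := by
    rw [Finset.sum_fiberwise_of_maps_to (fun i _ => Finset.mem_image.mpr
      ⟨i, Finset.mem_univ i, rfl⟩)]
  rw [this]
  refine Finset.sum_eq_zero fun s hs => ?_
  have : ∑ i ∈ Finset.univ.filter (fun i => c i = s), c i ^ n / w i =
      s ^ n * ∑ i ∈ Finset.univ.filter (fun i => c i = s), 1 / w i := by
    rw [Finset.mul_sum]
    refine Finset.sum_congr rfl fun i hi => ?_
    rw [(Finset.mem_filter.mp hi).2]; ring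
  rw [this, fiber s hs, mul_zero]
end

section
/- Let n ≥ 1 and d ≥ 2 be natural numbers and ρ_0 a positive natural number. If for all real g > 0 (using real powers g^a = exp(a log g)) the identity ∑_{t=0}^{n} ρ_0 * C(n,t) * g^{(n-2t)/d} * (-g)^t = 0 holds, then d = 2. -/
theorem semifree_first_chern_divisibility (n d ρ₀ : ℕ) (hn : 1 ≤ n) (hd : 2 ≤ d)
    (hρ : 0 < ρ₀)
    (h : ∀ g : ℝ, 0 < g →
      ∑ t ∈ Finset.range (n + 1),
        (ρ₀ : ℝ) * (n.choose t : ℝ) * g ^ (((n : ℝ) - 2 * t) / d) * (-g) ^ t = 0) :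
    d = 2 := by
  by_contra hne
  have hd3 : 3 ≤ d := by omega
  have hdpos : (0:ℝ) < (d:ℝ) := by exact_mod_cast (by omega : 0 < d)
  have hdne : (d:ℝ) ≠ 0 := ne_of_gt hdpos
  have hd3R : (3:ℝ) ≤ (d:ℝ) := by exact_mod_cast hd3
  have h2 := h 2 (by norm_num)
  set c : ℝ := (2:ℝ) ^ (((d:ℝ) - 2) / d) with hc
  have hcgt : 1 < c := by
    rw [hc]
    apply Real.one_lt_rpow_iff_of_pos (by norm_num) |>.mpr
    exact Or.inl ⟨by norm_num, div_pos (by linarith) hdpos⟩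
  have key : ∑ t ∈ Finset.range (n + 1),
        (ρ₀ : ℝ) * (n.choose t : ℝ) * (2:ℝ) ^ (((n : ℝ) - 2 * t) / d) * (-2:ℝ) ^ t
      = (ρ₀ : ℝ) * (2:ℝ) ^ ((n:ℝ)/d) * (1 - c)^n := by
    have hexp : (1 - c)^n = ((-c) + 1)^n := by ring_nf
    rw [hexp, add_pow, Finset.mul_sum]
    apply Finset.sum_congr rfl
    intro t _
    have hct : c ^ t = (2:ℝ) ^ ((((d:ℝ) - 2) / d) * t) := by
      rw [hc, ← Real.rpow_natCast ((2:ℝ) ^ (((d:ℝ) - 2) / d)) t,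
        ← Real.rpow_mul (by norm_num)]
    have h2t : (2:ℝ) ^ t = (2:ℝ) ^ ((t:ℝ)) := by
      rw [Real.rpow_natCast]
    have hmain : (2:ℝ) ^ (((n : ℝ) - 2 * t) / d) * (2:ℝ) ^ t
        = (2:ℝ) ^ ((n:ℝ)/d) * c ^ t := by
      rw [hct, h2t, ← Real.rpow_add (by norm_num), ← Real.rpow_add (by norm_num)]
      congr 1
      field_simp
      ring
    have hneg2 : (-2:ℝ) ^ t = (-1:ℝ)^t * 2 ^ t := by
      rw [← neg_one_mul, mul_pow]
    have hnegc : (-c) ^ t = (-1:ℝ)^t * c ^ t := by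
      rw [← neg_one_mul, mul_pow]
    rw [hneg2, hnegc, one_pow]
    linear_combination ((ρ₀:ℝ) * (n.choose t : ℝ) * (-1:ℝ)^t) * hmain
  rw [key] at h2
  have h1 : (0:ℝ) < (ρ₀:ℝ) := by exact_mod_cast hρ
  have h2pos : (0:ℝ) < (2:ℝ) ^ ((n:ℝ)/d) := Real.rpow_pos_of_pos (by norm_num) _
  have h3 : (1 - c)^n ≠ 0 := pow_ne_zero _ (by linarith)
  have := mul_ne_zero (mul_ne_zero (ne_of_gt h1) (ne_of_gt h2pos)) h3
  exact this h2
end
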